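/- Define G₁ : ℝ³ → ℝ by G₁(x₁, p, q) = 45·(1−x₁) + 5·x₁ + (95·x₁ − 45·(1−x₁))·p + (20·(1−x₁) − 5·x₁)·q − 5·x₁·p·q − 10·(1−x₁)·q², and G₂ : ℝ³ → ℝ by G₂(x₂, p, q) = 50·x₂ + 50·x₂·p + (200·(1−x₂) − 50·x₂)·q − 50·x₂·p·q − 100·(1−x₂)·q². Then [the supremum over x₁ ∈ [0,1] of the infimum, over all finitely supported probability distributions μ on [1/10, 9/10]², of E_μ[(p,q) ↦ G₁(x₁, p, q)]] plus [the supremum over x₂ ∈ [0,1] of the infimum, over all finitely supported probability distributions μ on [1/10, 9/10]², of E_μ[(p,q) ↦ G₂(x₂, p, q)]] equals 719/10 (i.e., 71.9). -/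

import Mathlib

/-- A finitely supported probability distribution on a set `S`. -/
def IsFinProbDist {α : Type*} (S : Set α) (μ : α →₀ ℝ) : Prop :=
  (∀ u, 0 ≤ μ u) ∧ ↑μ.support ⊆ S ∧ (∑ u ∈ μ.support, μ u) = 1

/-- Expectation of `g` under a finitely supported distribution `μ`. -/
noncomputable def expect {α : Type*} (μ : α →₀ ℝ) (g : α → ℝ) : ℝ :=
  ∑ u ∈ μ.support, μ u * g u

noncomputable def G₁ (x₁ p q : ℝ) : ℝ :=
  45 * (1 - x₁) + 5 * x₁ + (95 * x₁ - 45 * (1 - x₁)) * p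
    + (20 * (1 - x₁) - 5 * x₁) * q - 5 * x₁ * (p * q) - 10 * (1 - x₁) * q ^ 2

noncomputable def G₂ (x₂ p q : ℝ) : ℝ :=
  50 * x₂ + 50 * x₂ * p + (200 * (1 - x₂) - 50 * x₂) * q
    - 50 * x₂ * (p * q) - 100 * (1 - x₂) * q ^ 2


/-!
Both summands are maxmin values of a game in which nature may mix over the square
`[1/10, 9/10]²`. Mixing never lowers nature's value below its best pure response, so each
inner infimum is a pointwise minimum. For `G₁` nature's best pure responses are `(9/10, 1/10)`
and `(1/10, 1/10)`, whose payoffs are affine in `x₁` with slopes of opposite sign; the agent's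
optimum `x₁ = 10/31` equalises them at `10299/310`. Likewise for `G₂` the responses
`(1/10, 1/10)` and `(1/10, 9/10)` cross at `x₂ = 20/31` with value `1199/31`, and
`10299/310 + 1199/31 = 719/10`.
-/

open Set

section FinProbDist

variable {α : Type*} {S : Set α} {μ : α →₀ ℝ} {g : α → ℝ}

theorem IsFinProbDist.le_expect (hμ : IsFinProbDist S μ) {m : ℝ} (hg : ∀ u ∈ S, m ≤ g u) :
    m ≤ expect μ g := by
  obtain ⟨hnonneg, hsupp, hsum⟩ := hμ
  calc m = ∑ u ∈ μ.support, μ u * m := by rw [← Finset.sum_mul, hsum, one_mul]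
    _ ≤ expect μ g :=
      Finset.sum_le_sum fun u hu => mul_le_mul_of_nonneg_left (hg u (hsupp hu)) (hnonneg u)

theorem isFinProbDist_single {a : α} (ha : a ∈ S) : IsFinProbDist S (Finsupp.single a 1) := by
  refine ⟨fun u => ?_, ?_, ?_⟩
  · classical
    rw [Finsupp.single_apply]
    split_ifs <;> norm_num
  · simpa [Finsupp.support_single] using ha
  · simp [Finsupp.support_single]

theorem expect_single_one (a : α) (g : α → ℝ) : expect (Finsupp.single a 1) g = g a := by
  simp [expect, Finsupp.support_single]

theorem bddBelow_expect (hg : BddBelow (g '' S)) :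
    BddBelow {w | ∃ μ : α →₀ ℝ, IsFinProbDist S μ ∧ w = expect μ g} := by
  obtain ⟨m, hm⟩ := hg
  exact ⟨m, by
    rintro w ⟨μ, hμ, rfl⟩
    exact hμ.le_expect fun u hu => hm (mem_image_of_mem g hu)⟩

theorem sInf_expect_le (hg : BddBelow (g '' S)) {a : α} (ha : a ∈ S) :
    sInf {w | ∃ μ : α →₀ ℝ, IsFinProbDist S μ ∧ w = expect μ g} ≤ g a :=
  csInf_le (bddBelow_expect hg) ⟨_, isFinProbDist_single ha, (expect_single_one a g).symm⟩

theorem sInf_expect_eq_of_isLeast {m : ℝ} (hm : IsLeast (g '' S) m) :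
    sInf {w | ∃ μ : α →₀ ℝ, IsFinProbDist S μ ∧ w = expect μ g} = m := by
  obtain ⟨⟨a, ha, rfl⟩, hlow⟩ := hm
  refine IsLeast.csInf_eq ⟨⟨_, isFinProbDist_single ha, (expect_single_one a g).symm⟩, ?_⟩
  rintro w ⟨μ, hμ, rfl⟩
  exact hμ.le_expect fun u hu => hlow (mem_image_of_mem g hu)

theorem sSup_sInf_expect_eq {β : Type*} {T : Set β} {G : β → α → ℝ}
    (hbdd : ∀ x ∈ T, BddBelow (G x '' S)) {x₀ : β} (hx₀ : x₀ ∈ T) {v : ℝ}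
    (hopt : IsLeast (G x₀ '' S) v) (hresp : ∀ x ∈ T, ∃ u ∈ S, G x u ≤ v) :
    sSup {v' | ∃ x ∈ T, v' = sInf {w | ∃ μ : α →₀ ℝ, IsFinProbDist S μ ∧ w = expect μ (G x)}}
      = v := by
  refine IsGreatest.csSup_eq ⟨⟨x₀, hx₀, (sInf_expect_eq_of_isLeast hopt).symm⟩, ?_⟩
  rintro _ ⟨x, hx, rfl⟩
  obtain ⟨u, hu, hGu⟩ := hresp x hx
  exact (sInf_expect_le (hbdd x hx) hu).trans hGu

end FinProbDist

abbrev natureSquare : Set (ℝ × ℝ) := Icc (1/10 : ℝ) (9/10) ×ˢ Icc (1/10 : ℝ) (9/10)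

theorem isCompact_natureSquare : IsCompact natureSquare :=
  isCompact_Icc.prod isCompact_Icc

theorem continuous_G₁ (x : ℝ) : Continuous fun u : ℝ × ℝ => G₁ x u.1 u.2 := by
  unfold G₁; fun_prop

theorem continuous_G₂ (x : ℝ) : Continuous fun u : ℝ × ℝ => G₂ x u.1 u.2 := by
  unfold G₂; fun_prop

theorem G₁_nine_tenths_one_tenth (x : ℝ) : G₁ x (9/10) (1/10) = 32/5 + 1663/20 * x := by
  unfold G₁; ring

theorem G₁_one_tenth_one_tenth (x : ℝ) : G₁ x (1/10) (1/10) = 212/5 - 569/20 * x := by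
  unfold G₁; ring

theorem isLeast_G₁_ten_thirtyfirsts :
    IsLeast ((fun u : ℝ × ℝ => G₁ (10/31) u.1 u.2) '' natureSquare) (10299/310) := by
  refine ⟨⟨(9/10, 1/10), by norm_num, by norm_num [G₁_nine_tenths_one_tenth]⟩, ?_⟩
  rintro _ ⟨⟨p, q⟩, hpq, rfl⟩
  simp only [mem_prod, mem_Icc] at hpq
  obtain ⟨⟨-, hp⟩, hq₀, hq₁⟩ := hpq
  have hfactor : G₁ (10/31) p q - 10299/310 = (q - 1/10) * (349 - 50 * p - 210 * q) / 31 := by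
    unfold G₁; ring
  have hnonneg : 0 ≤ (q - 1/10) * (349 - 50 * p - 210 * q) :=
    mul_nonneg (by linarith) (by linarith)
  change 10299/310 ≤ G₁ (10/31) p q
  linarith

theorem exists_G₁_le (x : ℝ) : ∃ u ∈ natureSquare, G₁ x u.1 u.2 ≤ 10299/310 := by
  rcases le_total x (10/31) with hx | hx
  · exact ⟨(9/10, 1/10), by norm_num, by rw [G₁_nine_tenths_one_tenth]; linarith⟩
  · exact ⟨(1/10, 1/10), by norm_num, by rw [G₁_one_tenth_one_tenth]; linarith⟩

theorem G₂_one_tenth_one_tenth (x : ℝ) : G₂ x (1/10) (1/10) = 19 + 61/2 * x := by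
  unfold G₂; ring

theorem G₂_one_tenth_nine_tenths (x : ℝ) : G₂ x (1/10) (9/10) = 99 - 187/2 * x := by
  unfold G₂; ring

theorem isLeast_G₂_twenty_thirtyfirsts :
    IsLeast ((fun u : ℝ × ℝ => G₂ (20/31) u.1 u.2) '' natureSquare) (1199/31) := by
  refine ⟨⟨(1/10, 1/10), by norm_num, by norm_num [G₂_one_tenth_one_tenth]⟩, ?_⟩
  rintro _ ⟨⟨p, q⟩, hpq, rfl⟩
  simp only [mem_prod, mem_Icc] at hpq
  obtain ⟨⟨hp, -⟩, hq₀, hq₁⟩ := hpq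
  have hdecomp : G₂ (20/31) p q - 1199/31
      = (1000 * (p - 1/10) * (1 - q) + 1100 * (q - 1/10) * (9/10 - q)) / 31 := by
    unfold G₂; ring
  have hnonneg : 0 ≤ 1000 * (p - 1/10) * (1 - q) + 1100 * (q - 1/10) * (9/10 - q) :=
    add_nonneg (mul_nonneg (mul_nonneg (by norm_num) (by linarith)) (by linarith))
      (mul_nonneg (mul_nonneg (by norm_num) (by linarith)) (by linarith))
  change 1199/31 ≤ G₂ (20/31) p q
  linarith

theorem exists_G₂_le (x : ℝ) : ∃ u ∈ natureSquare, G₂ x u.1 u.2 ≤ 1199/31 := by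
  rcases le_total x (20/31) with hx | hx
  · exact ⟨(1/10, 1/10), by norm_num, by rw [G₂_one_tenth_one_tenth]; linarith⟩
  · exact ⟨(1/10, 9/10), by norm_num, by rw [G₂_one_tenth_nine_tenths]; linarith⟩

theorem observationStickiness_optimal_value :
    sSup {v : ℝ | ∃ x₁ ∈ Set.Icc (0 : ℝ) 1,
        v = sInf {w : ℝ | ∃ μ : (ℝ × ℝ) →₀ ℝ,
          IsFinProbDist (Set.Icc (1/10 : ℝ) (9/10) ×ˢ Set.Icc (1/10 : ℝ) (9/10)) μ ∧
          w = expect μ (fun u => G₁ x₁ u.1 u.2)}}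
      +
    sSup {v : ℝ | ∃ x₂ ∈ Set.Icc (0 : ℝ) 1,
        v = sInf {w : ℝ | ∃ μ : (ℝ × ℝ) →₀ ℝ,
          IsFinProbDist (Set.Icc (1/10 : ℝ) (9/10) ×ˢ Set.Icc (1/10 : ℝ) (9/10)) μ ∧
          w = expect μ (fun u => G₂ x₂ u.1 u.2)}} = 719 / 10 := by
  have hmaxmin₁ := sSup_sInf_expect_eq (G := fun x (u : ℝ × ℝ) => G₁ x u.1 u.2)
    (fun x _ => isCompact_natureSquare.bddBelow_image (continuous_G₁ x).continuousOn)
    (by norm_num : (10/31 : ℝ) ∈ Icc 0 1) isLeast_G₁_ten_thirtyfirsts fun x _ => exists_G₁_le x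
  have hmaxmin₂ := sSup_sInf_expect_eq (G := fun x (u : ℝ × ℝ) => G₂ x u.1 u.2)
    (fun x _ => isCompact_natureSquare.bddBelow_image (continuous_G₂ x).continuousOn)
    (by norm_num : (20/31 : ℝ) ∈ Icc 0 1) isLeast_G₂_twenty_thirtyfirsts fun x _ => exists_G₂_le x
  rw [hmaxmin₁, hmaxmin₂]
  norm_num
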